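/- arXiv:math/0508428 — 6 statements merged into one kernel-verified Lean document; each statement's English description precedes it below -/
import Mathlib

section
/- For every 3×3 complex matrix a, the identity 9·|P(a, a, āᵀ)|² = |det(a)|² + 8·det(Q(a, āᵀ)) holds. In particular det(Q(a, āᵀ)) is real and satisfies −(1/8)·|det(a)|² ≤ det(Q(a, āᵀ)). -/
open Matrix

/-- The symmetric bilinear polarization of the adjugate on 3×3 complex matrices. -/
noncomputable def Qpol (a b : Matrix (Fin 3) (Fin 3) ℂ) : Matrix (Fin 3) (Fin 3) ℂ :=
  (2 : ℂ)⁻¹ • ((a + b).adjugate - a.adjugate - b.adjugate)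

/-- The symmetric trilinear polarization of the determinant on 3×3 complex matrices. -/
noncomputable def Ppol (a b c : Matrix (Fin 3) (Fin 3) ℂ) : ℂ :=
  (6 : ℂ)⁻¹ * ((a + b + c).det - (a + b).det - (b + c).det - (a + c).det
      + a.det + b.det + c.det)

/-!
For arbitrary `a b` one has the polynomial identity
`9 P(a,a,b) P(b,b,a) = det a · det b + 8 det Q(a,b)`.
Taking `b = aᴴ`, the two factors on the left are complex conjugates of each other, as are
`det a` and `det aᴴ`, so the identity reads `9 |P|² = |det a|² + 8 det Q`; hence `det Q` is
real and `8 det Q = 9 |P|² - |det a|² ≥ -|det a|²`.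
-/

theorem nine_mul_Ppol_mul_Ppol (a b : Matrix (Fin 3) (Fin 3) ℂ) :
    9 * Ppol a a b * Ppol b b a = a.det * b.det + 8 * (Qpol a b).det := by
  simp only [Ppol, Qpol, det_fin_three, adjugate_fin_three, Matrix.smul_apply, Matrix.sub_apply,
    Matrix.add_apply, of_apply, cons_val', cons_val_zero, cons_val_one, head_cons, empty_val',
    cons_val_fin_one, head_fin_const, smul_eq_mul, cons_val_two, tail_cons]
  ring

theorem star_Ppol (a b c : Matrix (Fin 3) (Fin 3) ℂ) :
    star (Ppol a b c) = Ppol aᴴ bᴴ cᴴ := by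
  simp only [Ppol, ← conjTranspose_add, det_conjTranspose, star_mul', star_add, star_sub,
    star_inv₀, star_ofNat]

theorem norm_Ppol_sq (a : Matrix (Fin 3) (Fin 3) ℂ) :
    (‖Ppol a a aᴴ‖ ^ 2 : ℂ) = Ppol a a aᴴ * Ppol aᴴ aᴴ a := by
  rw [← Complex.mul_conj', ← Complex.star_def, star_Ppol, conjTranspose_conjTranspose]

theorem norm_det_sq {n : Type*} [Fintype n] [DecidableEq n] (a : Matrix n n ℂ) :
    (‖a.det‖ ^ 2 : ℂ) = a.det * aᴴ.det := by
  rw [← Complex.mul_conj', det_conjTranspose, Complex.star_def]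

/-- `9·|P(a,a,āᵀ)|² = |det(a)|² + 8·det(Q(a,āᵀ))`; in particular
`det(Q(a,āᵀ))` is real and at least `−(1/8)·|det(a)|²`. -/
theorem stmt7 (a : Matrix (Fin 3) (Fin 3) ℂ) :
    (9 * ‖Ppol a a aᴴ‖ ^ 2 : ℂ)
        = (‖a.det‖ : ℂ) ^ 2 + 8 * (Qpol a aᴴ).det ∧
    ((Qpol a aᴴ).det).im = 0 ∧
    -(1 / 8) * ‖a.det‖ ^ 2 ≤ ((Qpol a aᴴ).det).re := by
  have identity : (9 * ‖Ppol a a aᴴ‖ ^ 2 : ℂ) = (‖a.det‖ : ℂ) ^ 2 + 8 * (Qpol a aᴴ).det := by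
    rw [norm_Ppol_sq, norm_det_sq, ← nine_mul_Ppol_mul_Ppol]
    ring
  have det_Qpol_real : (Qpol a aᴴ).det = (((9 * ‖Ppol a a aᴴ‖ ^ 2 - ‖a.det‖ ^ 2) / 8 : ℝ) : ℂ) := by
    push_cast
    linear_combination -identity / 8
  refine ⟨identity, ?_, ?_⟩
  · rw [det_Qpol_real, Complex.ofReal_im]
  · rw [det_Qpol_real, Complex.ofReal_re]
    nlinarith [sq_nonneg ‖Ppol a a aᴴ‖]
end

section
/- If a is the diagonal matrix diag(e^{iλ₁}, e^{iλ₂}, e^{iλ₃}) with λ₁ + λ₂ + λ₃ = 0 (real λᵢ), then P(a, a, āᵀ) = (1/3)(e^{−2iλ₁} + e^{−2iλ₂} + e^{−2iλ₃}) and Q(a, āᵀ) = diag(cos(λ₂−λ₃), cos(λ₃−λ₁), cos(λ₁−λ₂)). -/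
open Matrix

/-- for `a = diag(e^{iλ₁}, e^{iλ₂}, e^{iλ₃})` with `λ₁+λ₂+λ₃ = 0`:
`P(a,a,āᵀ) = (1/3)(e^{−2iλ₁} + e^{−2iλ₂} + e^{−2iλ₃})` and
`Q(a,āᵀ) = diag(cos(λ₂−λ₃), cos(λ₃−λ₁), cos(λ₁−λ₂))`. -/
theorem stmt8 (l : Fin 3 → ℝ) (hsum : l 0 + l 1 + l 2 = 0)
    (a : Matrix (Fin 3) (Fin 3) ℂ)
    (ha : a = Matrix.diagonal fun i => Complex.exp (Complex.I * (l i : ℂ))) :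
    Ppol a a aᴴ
      = (3 : ℂ)⁻¹ * (Complex.exp (-2 * Complex.I * (l 0 : ℂ))
          + Complex.exp (-2 * Complex.I * (l 1 : ℂ))
          + Complex.exp (-2 * Complex.I * (l 2 : ℂ))) ∧
    Qpol a aᴴ
      = Matrix.diagonal ![(Real.cos (l 1 - l 2) : ℂ),
          (Real.cos (l 2 - l 0) : ℂ), (Real.cos (l 0 - l 1) : ℂ)] := by
  have hl : (l 0 : ℂ) + l 1 + l 2 = 0 := by exact_mod_cast hsum
  have hb : aᴴ = Matrix.diagonal fun i => Complex.exp (-(Complex.I * (l i : ℂ))) := by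
    rw [ha, diagonal_conjTranspose]
    have hst : ∀ i : Fin 3, star (Complex.exp (Complex.I * (l i : ℂ)))
        = Complex.exp (-(Complex.I * (l i : ℂ))) := by
      intro i
      rw [RCLike.star_def, ← Complex.exp_conj, _root_.map_mul, Complex.conj_I,
        Complex.conj_ofReal]
      ring_nf
    ext i j
    simp only [diagonal_apply, Pi.star_apply]
    split <;> simp [hst]
  have key : ∀ i j k : Fin 3, (l i : ℂ) + l j + l k = 0 →
      Complex.exp (Complex.I * (l i : ℂ)) * Complex.exp (Complex.I * (l j : ℂ)) *
        Complex.exp (-(Complex.I * (l k : ℂ))) = Complex.exp (-2 * Complex.I * (l k : ℂ)) := by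
    intro i j k h
    rw [← Complex.exp_add, ← Complex.exp_add]
    congr 1
    linear_combination Complex.I * h
  have k2 := key 0 1 2 hl
  have k1 := key 2 0 1 (by linear_combination hl)
  have k0 := key 1 2 0 (by linear_combination hl)
  constructor
  · rw [Ppol, hb, ha]
    simp only [diagonal_add, det_diagonal, Fin.prod_univ_three, Pi.add_apply]
    linear_combination (3 : ℂ)⁻¹ * (k0 + k1 + k2)
  · have hc : ∀ x y : ℝ, (Real.cos (x - y) : ℂ)
        = (2 : ℂ)⁻¹ * (Complex.exp (Complex.I * x) * Complex.exp (-(Complex.I * y))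
          + Complex.exp (Complex.I * y) * Complex.exp (-(Complex.I * x))) := by
      intro x y
      rw [Complex.ofReal_cos, ← Complex.exp_add, ← Complex.exp_add]
      have := Complex.two_cos (x := ((x : ℂ) - y))
      push_cast
      rw [show Complex.I * x + -(Complex.I * y) = ((x : ℂ) - y) * Complex.I by ring,
        show Complex.I * y + -(Complex.I * x) = -((x : ℂ) - y) * Complex.I by ring]
      linear_combination (2 : ℂ)⁻¹ * this
    have e0 : Finset.univ.erase (0 : Fin 3) = {1, 2} := by decide
    have e1 : Finset.univ.erase (1 : Fin 3) = {0, 2} := by decide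
    have e2 : Finset.univ.erase (2 : Fin 3) = {0, 1} := by decide
    rw [Qpol, hb, ha, diagonal_add, adjugate_diagonal, adjugate_diagonal, adjugate_diagonal,
      diagonal_sub, diagonal_sub, ← diagonal_smul]
    refine congrArg Matrix.diagonal ?_
    funext i
    fin_cases i <;>
      simp only [Pi.smul_apply, smul_eq_mul, Fin.zero_eta, Fin.mk_one, Fin.isValue,
        show ((⟨2, by omega⟩ : Fin 3)) = 2 from rfl,
        e0, e1, e2, Finset.prod_pair (show (1 : Fin 3) ≠ 2 by decide),
        Finset.prod_pair (show (0 : Fin 3) ≠ 2 by decide),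
        Finset.prod_pair (show (0 : Fin 3) ≠ 1 by decide),
        Matrix.cons_val_zero, Matrix.cons_val_one, Matrix.head_cons, Matrix.cons_val_two,
        Matrix.tail_cons, Matrix.cons_val_fin_one] <;>
      rw [hc] <;> ring
end

section
/- For the diagonal matrix a = diag(e^{iλ₁}, e^{iλ₂}, e^{iλ₃}) with real λᵢ summing to zero, the identity 9·|P(a,a,āᵀ)|² = 1 + 8·cos(λ₂−λ₃)·cos(λ₃−λ₁)·cos(λ₁−λ₂) holds; in particular cos(λ₂−λ₃)·cos(λ₃−λ₁)·cos(λ₁−λ₂) ≥ −1/8. -/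
/-!
For diagonal matrices the polarization of `det` is the mixed product
`P(diag u, diag v, diag w) = (1/6) ∑_σ u_{σ 0} v_{σ 1} w_{σ 2}`, so `3 P(a, a, āᵀ)` is a sum of
the three unit complex numbers `e^{i(λ₀+λ₁-λ₂)}, e^{i(λ₂+λ₀-λ₁)}, e^{i(λ₁+λ₂-λ₀)}`, whose
pairwise angle differences are `2(λ₁-λ₂), 2(λ₂-λ₀), 2(λ₀-λ₁)`. Hence
`9 |P|² = 3 + 2 ∑ cos 2(λᵢ - λⱼ)`, and since the three differences `λᵢ - λⱼ` sum to zero this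
is `1 + 8 ∏ cos(λᵢ - λⱼ)`.
-/

open Matrix

theorem Ppol_diagonal (u v w : Fin 3 → ℂ) :
    Ppol (diagonal u) (diagonal v) (diagonal w) = 6⁻¹ *
      (u 0 * v 1 * w 2 + u 0 * v 2 * w 1 + u 1 * v 0 * w 2
        + u 1 * v 2 * w 0 + u 2 * v 0 * w 1 + u 2 * v 1 * w 0) := by
  simp only [Ppol, diagonal_add, det_diagonal, Fin.prod_univ_three]
  ring

section

open Complex

theorem Ppol_diagonal_exp (l : Fin 3 → ℝ) :
    Ppol (diagonal fun i => exp (I * l i)) (diagonal fun i => exp (I * l i))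
        (diagonal fun i => exp (I * l i))ᴴ =
      3⁻¹ * (exp (I * ↑(l 0 + l 1 - l 2)) + exp (I * ↑(l 2 + l 0 - l 1))
        + exp (I * ↑(l 1 + l 2 - l 0))) := by
  have star_exp (t : ℝ) : star (exp (I * t)) = (exp (I * t))⁻¹ := by
    rw [star_def, ← exp_conj, ← Complex.exp_neg]; simp
  simp only [diagonal_conjTranspose, Ppol_diagonal, Pi.star_apply, star_exp]
  push_cast
  simp only [mul_add, mul_sub, exp_add, exp_sub]
  ring

theorem Complex.norm_exp_add_exp_add_exp_sq (α β γ : ℝ) :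
    ‖exp (I * α) + exp (I * β) + exp (I * γ)‖ ^ 2
      = 3 + 2 * (Real.cos (α - β) + Real.cos (β - γ) + Real.cos (γ - α)) := by
  simp only [Complex.sq_norm, normSq_apply, add_re, add_im, mul_comm I, exp_ofReal_mul_I_re,
    exp_ofReal_mul_I_im, Real.cos_sub]
  linear_combination Real.sin_sq_add_cos_sq α + Real.sin_sq_add_cos_sq β +
    Real.sin_sq_add_cos_sq γ

theorem Real.one_add_eight_mul_cos_mul_cos_mul_cos {A B C : ℝ} (h : A + B + C = 0) :
    1 + 8 * (cos A * cos B * cos C) = 3 + 2 * (cos (2 * A) + cos (2 * B) + cos (2 * C)) := by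
  obtain rfl : C = -(A + B) := by linarith
  simp only [cos_neg, cos_two_mul, cos_add]
  linear_combination
    -4 * sin B ^ 2 * sin_sq_add_cos_sq A + 4 * (cos A ^ 2 - 1) * sin_sq_add_cos_sq B

theorem stmt9_general (l : Fin 3 → ℝ)
    (a : Matrix (Fin 3) (Fin 3) ℂ)
    (ha : a = Matrix.diagonal fun i => Complex.exp (Complex.I * (l i : ℂ))) :
    9 * ‖Ppol a a aᴴ‖ ^ 2
      = 1 + 8 * (Real.cos (l 1 - l 2) * Real.cos (l 2 - l 0) * Real.cos (l 0 - l 1)) ∧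
    -(1 / 8 : ℝ) ≤ Real.cos (l 1 - l 2) * Real.cos (l 2 - l 0) * Real.cos (l 0 - l 1) := by
  have hnorm : 9 * ‖Ppol a a aᴴ‖ ^ 2
      = 1 + 8 * (Real.cos (l 1 - l 2) * Real.cos (l 2 - l 0) * Real.cos (l 0 - l 1)) := by
    rw [ha, Ppol_diagonal_exp, norm_mul, mul_pow, Complex.norm_exp_add_exp_add_exp_sq,
      Real.one_add_eight_mul_cos_mul_cos_mul_cos (by ring)]
    norm_num
    ring_nf
  exact ⟨hnorm, by linarith [sq_nonneg ‖Ppol a a aᴴ‖]⟩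

/-- for `a = diag(e^{iλ₁}, e^{iλ₂}, e^{iλ₃})` with real `λᵢ` summing
to zero, `9·|P(a,a,āᵀ)|² = 1 + 8·cos(λ₂−λ₃)·cos(λ₃−λ₁)·cos(λ₁−λ₂)`; in particular
`cos(λ₂−λ₃)·cos(λ₃−λ₁)·cos(λ₁−λ₂) ≥ −1/8`. -/
theorem stmt9 (l : Fin 3 → ℝ) (hsum : l 0 + l 1 + l 2 = 0)
    (a : Matrix (Fin 3) (Fin 3) ℂ)
    (ha : a = Matrix.diagonal fun i => Complex.exp (Complex.I * (l i : ℂ))) :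
    9 * ‖Ppol a a aᴴ‖ ^ 2
      = 1 + 8 * (Real.cos (l 1 - l 2) * Real.cos (l 2 - l 0) * Real.cos (l 0 - l 1)) ∧
    -(1 / 8 : ℝ) ≤ Real.cos (l 1 - l 2) * Real.cos (l 2 - l 0) * Real.cos (l 0 - l 1) :=
  stmt9_general l a ha
end
end

section
/- For real λ₁, λ₂, λ₃ with λ₁+λ₂+λ₃ = 0 and |λᵢ| < π/2 for all i, the matrix Q(a, āᵀ) = diag(cos(λ₂−λ₃), cos(λ₃−λ₁), cos(λ₁−λ₂)), for a = diag(e^{iλ₁}, e^{iλ₂}, e^{iλ₃}), satisfies the bound det Q(a,āᵀ) ≤ 1 = |det(a)|², with equality iff λ₁=λ₂=λ₃=0. -/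
/-!
For diagonal `a` the polarized adjugate `Q(a, aᴴ)` is diagonal with entries `Re (aⱼ · conj aₖ)`,
which for `aⱼ = e^{iλⱼ}` are `cos (λⱼ - λₖ)`. Its determinant is a product of three cosines,
hence at most `1`; and when `|λᵢ| < π/2` the differences lie in `(-π, π)`, where `|cos| = 1`
only at `0`, so equality forces `λ₁ = λ₂ = λ₃`, i.e. all `λᵢ = 0` since they sum to zero.
-/

open Matrix

theorem Qpol_diagonal (d e : Fin 3 → ℂ) :
    Qpol (diagonal d) (diagonal e) = diagonal ![(d 1 * e 2 + e 1 * d 2) / 2,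
      (d 2 * e 0 + e 2 * d 0) / 2, (d 0 * e 1 + e 0 * d 1) / 2] := by
  rw [Qpol, adjugate_fin_three, adjugate_fin_three, adjugate_fin_three]
  ext i j
  fin_cases i <;> fin_cases j <;> simp <;> ring

theorem Qpol_diagonal_conjTranspose (d : Fin 3 → ℂ) :
    Qpol (diagonal d) (diagonal d)ᴴ = diagonal ![((d 1 * star (d 2)).re : ℂ),
      ((d 2 * star (d 0)).re : ℂ), ((d 0 * star (d 1)).re : ℂ)] := by
  simp only [diagonal_conjTranspose, Qpol_diagonal, Complex.re_eq_add_conj, Pi.star_apply,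
    map_mul, Complex.star_def, Complex.conj_conj]

theorem Complex.re_exp_I_mul_mul_star_exp_I_mul (x y : ℝ) :
    (exp (I * x) * star (exp (I * y))).re = Real.cos (x - y) := by
  rw [star_def, ← exp_conj, ← exp_add, ← exp_ofReal_mul_I_re]
  congr 2
  simp only [map_mul, conj_I, conj_ofReal]
  push_cast
  ring

section LinearOrderedRing

variable {α : Type*} [Ring α] [LinearOrder α] [IsStrictOrderedRing α]

theorem abs_eq_one_of_abs_mul_eq_one {a b : α} (ha : |a| ≤ 1) (hb : |b| ≤ 1)
    (h : |a * b| = 1) : |a| = 1 ∧ |b| = 1 := by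
  rw [abs_mul] at h
  exact ⟨le_antisymm ha (h ▸ mul_le_of_le_one_right (abs_nonneg a) hb),
    le_antisymm hb (h ▸ mul_le_of_le_one_left (abs_nonneg b) ha)⟩

theorem abs_mul_le_one_of_abs_le_one {a b : α} (ha : |a| ≤ 1) (hb : |b| ≤ 1) : |a * b| ≤ 1 := by
  rw [abs_mul]
  exact mul_le_one₀ ha (abs_nonneg b) hb

end LinearOrderedRing

namespace Real

theorem eq_zero_of_abs_cos_eq_one {x : ℝ} (hx : |x| < π) (h : |cos x| = 1) : x = 0 := by
  have hsin : sin x = 0 := by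
    nlinarith [sin_sq_add_cos_sq x, sq_abs (cos x), sq_nonneg (sin x)]
  exact (sin_eq_zero_iff_of_lt_of_lt (abs_lt.1 hx).1 (abs_lt.1 hx).2).1 hsin

theorem cos_mul_cos_mul_cos_le_one (x y z : ℝ) : cos x * cos y * cos z ≤ 1 :=
  (le_abs_self _).trans <| abs_mul_le_one_of_abs_le_one
    (abs_mul_le_one_of_abs_le_one (abs_cos_le_one x) (abs_cos_le_one y)) (abs_cos_le_one z)

theorem cos_sub_mul_cos_sub_mul_cos_sub_eq_one_iff {x y z : ℝ} (hsum : x + y + z = 0)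
    (hx : |x| < π / 2) (hy : |y| < π / 2) (hz : |z| < π / 2) :
    cos (y - z) * cos (z - x) * cos (x - y) = 1 ↔ x = 0 ∧ y = 0 ∧ z = 0 := by
  refine ⟨fun h => ?_, by rintro ⟨rfl, rfl, rfl⟩; simp⟩
  have hdiff {u v : ℝ} (hu : |u| < π / 2) (hv : |v| < π / 2) : |u - v| < π := by
    linarith [abs_sub u v]
  obtain ⟨hyzx, -⟩ := abs_eq_one_of_abs_mul_eq_one
    (abs_mul_le_one_of_abs_le_one (abs_cos_le_one _) (abs_cos_le_one _)) (abs_cos_le_one _)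
    (by rw [h, abs_one])
  obtain ⟨hcos_yz, hcos_zx⟩ :=
    abs_eq_one_of_abs_mul_eq_one (abs_cos_le_one _) (abs_cos_le_one _) hyzx
  have hyz : y - z = 0 := eq_zero_of_abs_cos_eq_one (hdiff hy hz) hcos_yz
  have hzx : z - x = 0 := eq_zero_of_abs_cos_eq_one (hdiff hz hx) hcos_zx
  exact ⟨by linarith, by linarith, by linarith⟩

end Real

/-- for real `λ₁,λ₂,λ₃` with `λ₁+λ₂+λ₃ = 0` and `|λᵢ| < π/2`,
and `a = diag(e^{iλ₁}, e^{iλ₂}, e^{iλ₃})`, the (real) determinant of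
`Q(a,āᵀ) = diag(cos(λ₂−λ₃), cos(λ₃−λ₁), cos(λ₁−λ₂))` satisfies
`det Q(a,āᵀ) ≤ 1 = |det a|²`, with equality iff `λ₁=λ₂=λ₃=0`. -/
theorem stmt13 (l : Fin 3 → ℝ) (hsum : l 0 + l 1 + l 2 = 0)
    (hbd : ∀ i, |l i| < Real.pi / 2)
    (a : Matrix (Fin 3) (Fin 3) ℂ)
    (ha : a = Matrix.diagonal fun i => Complex.exp (Complex.I * (l i : ℂ))) :
    Qpol a aᴴ = Matrix.diagonal ![(Real.cos (l 1 - l 2) : ℂ),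
        (Real.cos (l 2 - l 0) : ℂ), (Real.cos (l 0 - l 1) : ℂ)] ∧
    ((Qpol a aᴴ).det).im = 0 ∧
    ((Qpol a aᴴ).det).re ≤ 1 ∧
    (1 : ℝ) = ‖a.det‖ ^ 2 ∧
    (((Qpol a aᴴ).det).re = 1 ↔ ∀ i, l i = 0) := by
  have hQ : Qpol a aᴴ = diagonal ![(Real.cos (l 1 - l 2) : ℂ),
      (Real.cos (l 2 - l 0) : ℂ), (Real.cos (l 0 - l 1) : ℂ)] := by
    rw [ha, Qpol_diagonal_conjTranspose]
    simp only [Complex.re_exp_I_mul_mul_star_exp_I_mul]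
  have hdet : (Qpol a aᴴ).det =
      ((Real.cos (l 1 - l 2) * Real.cos (l 2 - l 0) * Real.cos (l 0 - l 1) : ℝ) : ℂ) := by
    rw [hQ, det_diagonal, Fin.prod_univ_three]
    push_cast
    rfl
  refine ⟨hQ, by rw [hdet, Complex.ofReal_im], ?_, ?_, ?_⟩
  · rw [hdet, Complex.ofReal_re]
    exact Real.cos_mul_cos_mul_cos_le_one _ _ _
  · simp [ha, det_diagonal, norm_prod, Complex.norm_exp_I_mul_ofReal]
  · rw [hdet, Complex.ofReal_re,
      Real.cos_sub_mul_cos_sub_mul_cos_sub_eq_one_iff hsum (hbd 0) (hbd 1) (hbd 2)]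
    simp [Fin.forall_fin_succ]
end

section
/- For any 3-form φ on a 6-dimensional real vector space V, define J_φ : V → Λ⁵(V*) by J_φ(v) = (v ⌟ φ) ∧ φ, regarded via the isomorphism Λ⁵(V*) ≅ V ⊗ Λ⁶(V*) as an element of End(V) ⊗ Λ⁶(V*). Then tr(J_φ) = 0 for every φ ∈ Λ³(V*). -/
open ExteriorAlgebra

/-- The dual functional `⟨v, ·⟩` on `ℝ⁶` associated to a vector `v`. -/
noncomputable def dualV (v : Fin 6 → ℝ) : Module.Dual ℝ (Fin 6 → ℝ) :=
  ∑ i, v i • (LinearMap.proj i : (Fin 6 → ℝ) →ₗ[ℝ] ℝ)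

/-- Interior product (contraction) `v ⌟ φ` of a vector `v ∈ ℝ⁶` with an element of
the exterior algebra `Λ(V*)`, where `V*` is identified with `ℝ⁶`. -/
noncomputable def icontr (v : Fin 6 → ℝ) (φ : ExteriorAlgebra ℝ (Fin 6 → ℝ)) :
    ExteriorAlgebra ℝ (Fin 6 → ℝ) :=
  CliffordAlgebra.contractLeft (dualV v) φ

/-- The basis 1-forms `e¹,…,e⁶` (0-indexed) in the exterior algebra. -/
noncomputable def ee (i : Fin 6) : ExteriorAlgebra ℝ (Fin 6 → ℝ) :=
  ExteriorAlgebra.ι ℝ (Pi.single i 1)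

/-- The volume form `Ω = e¹∧e²∧e³∧e⁴∧e⁵∧e⁶`. -/
noncomputable def vol : ExteriorAlgebra ℝ (Fin 6 → ℝ) :=
  ee 0 * ee 1 * ee 2 * ee 3 * ee 4 * ee 5

/-- The space of 3-forms: the span of the image of `ιMulti ℝ 3`. -/
noncomputable def threeForms : Submodule ℝ (ExteriorAlgebra ℝ (Fin 6 → ℝ)) :=
  Submodule.span ℝ (Set.range (ExteriorAlgebra.ιMulti ℝ 3 (M := Fin 6 → ℝ)))

/-!
In the standard basis `e_q` of `ℝ⁶` with dual basis `e^q`, let `c(ω)` be the coefficient of a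
6-form `ω` on `Ω`. Everything rests on the Euler identity `∑_q e^q ∧ (e_q ⌟ ω) = k ω` for
`k`-forms `ω`. Combined with `e_q ⌟ (e^q ∧ x) = x - e^q ∧ (e_q ⌟ x)` it recovers a 5-form as
`x = ∑_q c(e^q ∧ x) (e_q ⌟ Ω)`, so `J_φ(v) = A(v) ⌟ Ω` with `A_{qi} = c(e^q ∧ (e_i ⌟ φ) ∧ φ)`.
Applied to `φ` it turns `tr A = c((∑_q e^q ∧ (e_q ⌟ φ)) ∧ φ)` into `3 c(φ ∧ φ)`, which vanishes
because forms of odd degree anticommute.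
-/

namespace ExteriorAlgebra

variable {R M : Type*} [CommRing R] [AddCommGroup M] [Module R M]

theorem ι_mul_ι_comm (m u : M) : ι R m * ι R u = -(ι R u * ι R m) :=
  eq_neg_of_add_eq_zero_left (ι_add_mul_swap m u)

theorem ι_mul_comm_of_mem_exteriorPower (m : M) {k : ℕ} {x : ExteriorAlgebra R M}
    (hx : x ∈ ⋀[R]^k M) : ι R m * x = (-1 : R) ^ k • (x * ι R m) := by
  induction hx using Submodule.pow_induction_on_left' with
  | algebraMap r => simp [Algebra.commutes]
  | add x y i _ _ hx hy => rw [mul_add, hx, hy, add_mul, smul_add]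
  | mem_mul m' hm' i x _ ih =>
    obtain ⟨u, rfl⟩ := hm'
    rw [← mul_assoc, ι_mul_ι_comm, neg_mul, mul_assoc, ih, mul_smul_comm, pow_succ,
      mul_neg_one, neg_smul, mul_assoc]

theorem mul_comm_of_mem_exteriorPower {j k : ℕ} {x y : ExteriorAlgebra R M}
    (hx : x ∈ ⋀[R]^j M) (hy : y ∈ ⋀[R]^k M) : x * y = (-1 : R) ^ (j * k) • (y * x) := by
  induction hx using Submodule.pow_induction_on_left' with
  | algebraMap r => simp [Algebra.commutes]
  | add x x' i _ _ hx hx' => rw [add_mul, hx, hx', mul_add, smul_add]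
  | mem_mul m hm i x _ ih =>
    obtain ⟨u, rfl⟩ := hm
    rw [mul_assoc, ih, mul_smul_comm, ← mul_assoc, ι_mul_comm_of_mem_exteriorPower u hy,
      smul_mul_assoc, smul_smul, mul_assoc, Nat.succ_mul, pow_add, mul_comm]

theorem mul_self_eq_zero_of_odd [Invertible (2 : R)] {k : ℕ} (hk : Odd k)
    {x : ExteriorAlgebra R M} (hx : x ∈ ⋀[R]^k M) : x * x = 0 := by
  have h : x * x = -(x * x) := by
    simpa [(hk.mul hk).neg_one_pow] using mul_comm_of_mem_exteriorPower hx hx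
  have h2 : (2 : R) • (x * x) = 0 := by rw [two_smul]; nth_rewrite 2 [h]; exact add_neg_cancel _
  simpa using congr_arg (⅟(2 : R) • ·) h2

theorem contractLeft_mem_exteriorPower (d : Module.Dual R M) {k : ℕ} {x : ExteriorAlgebra R M}
    (hx : x ∈ ⋀[R]^(k + 1) M) : CliffordAlgebra.contractLeft d x ∈ ⋀[R]^k M := by
  induction k generalizing x with
  | zero =>
    rw [exteriorPower, pow_one] at hx
    obtain ⟨u, rfl⟩ := hx
    rw [CliffordAlgebra.contractLeft_ι, exteriorPower, pow_zero]
    exact Submodule.algebraMap_mem _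
  | succ k ih =>
    rw [exteriorPower, pow_succ'] at hx
    induction hx using Submodule.mul_induction_on' with
    | mem_mul_mem m hm y hy =>
      obtain ⟨u, rfl⟩ := hm
      rw [CliffordAlgebra.contractLeft_ι_mul]
      refine sub_mem (Submodule.smul_mem _ _ hy) ?_
      rw [exteriorPower, pow_succ']
      exact Submodule.mul_mem_mul (LinearMap.mem_range_self _ u) (ih hy)
    | add x _ y _ hx hy => rw [map_add]; exact add_mem hx hy

theorem sum_ι_mul_contractLeft_coord {I : Type*} [Fintype I] (b : Module.Basis I R M) {k : ℕ}
    {x : ExteriorAlgebra R M} (hx : x ∈ ⋀[R]^k M) :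
    ∑ i, ι R (b i) * CliffordAlgebra.contractLeft (b.coord i) x = k • x := by
  induction hx using Submodule.pow_induction_on_left' with
  | algebraMap r => simp [CliffordAlgebra.contractLeft_algebraMap]
  | add x y i _ _ hx hy =>
    simp only [map_add, mul_add, Finset.sum_add_distrib, hx, hy, smul_add]
  | mem_mul m hm j x _ ih =>
    obtain ⟨u, rfl⟩ := hm
    have expand : ∑ i, ι R (b i) * (b.coord i u • x) = ι R u * x := by
      simp_rw [mul_smul_comm, ← smul_mul_assoc, ← Finset.sum_mul, ← map_smul, ← map_sum,
        Module.Basis.coord_apply, b.sum_repr]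
    have commute : ∑ i, ι R (b i) * (ι R u * CliffordAlgebra.contractLeft (b.coord i) x)
        = -(ι R u * (j • x)) := by
      simp_rw [← mul_assoc, ι_mul_ι_comm (b _), neg_mul, Finset.sum_neg_distrib, mul_assoc,
        ← Finset.mul_sum, ih]
    simp_rw [CliffordAlgebra.contractLeft_ι_mul, mul_sub, Finset.sum_sub_distrib, expand,
      commute, sub_neg_eq_add, succ_nsmul', mul_smul_comm]

theorem _root_.AlternatingMap.apply_eq_basis_det_smul {I N : Type*} [Fintype I] [DecidableEq I]
    [AddCommGroup N] [Module R N] (e : Module.Basis I R M) (f : M [⋀^I]→ₗ[R] N) (v : I → M) :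
    f v = e.det v • f e := by
  suffices f = (LinearMap.toSpanSingleton R N (f e)).compAlternatingMap e.det from
    congr($this v)
  refine e.ext_alternating fun i hi => ?_
  let σ : Equiv.Perm I := Equiv.ofBijective i (Finite.injective_iff_bijective.1 hi)
  change f (e ∘ σ) = (LinearMap.toSpanSingleton R N (f e)).compAlternatingMap e.det (e ∘ σ)
  simp [AlternatingMap.map_perm, Module.Basis.det_self]

section TopDegree

variable {n : ℕ}

noncomputable def topCoeff (b : Module.Basis (Fin n) R M) : ExteriorAlgebra R M →ₗ[R] R :=
  liftAlternating (Pi.single n b.det)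

theorem topCoeff_ιMulti (b : Module.Basis (Fin n) R M) (v : Fin n → M) :
    topCoeff b (ιMulti R n v) = b.det v := by
  simp [topCoeff, liftAlternating_apply_ιMulti]

theorem eq_topCoeff_smul_of_mem (b : Module.Basis (Fin n) R M) {x : ExteriorAlgebra R M}
    (hx : x ∈ ⋀[R]^n M) : x = topCoeff b x • ιMulti R n b := by
  rw [← ιMulti_span_fixedDegree] at hx
  induction hx using Submodule.span_induction with
  | mem _ h =>
    obtain ⟨v, rfl⟩ := h
    rw [topCoeff_ιMulti, AlternatingMap.apply_eq_basis_det_smul b]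
  | zero => simp
  | add x y _ _ hx hy => rw [map_add, add_smul, ← hx, ← hy]
  | smul r x _ hx => rw [map_smul, smul_eq_mul, mul_smul, ← hx]

theorem sum_topCoeff_smul_contractLeft_ιMulti {k : ℕ} (b : Module.Basis (Fin (k + 1)) R M)
    {x : ExteriorAlgebra R M} (hx : x ∈ ⋀[R]^k M) :
    ∑ i, topCoeff b (ι R (b i) * x) •
      CliffordAlgebra.contractLeft (b.coord i) (ιMulti R (k + 1) b) = x := by
  have top : ∀ i, ι R (b i) * x = topCoeff b (ι R (b i) * x) • ιMulti R (k + 1) b := by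
    refine fun i => eq_topCoeff_smul_of_mem b ?_
    rw [exteriorPower, pow_succ']
    exact Submodule.mul_mem_mul (LinearMap.mem_range_self _ _) hx
  calc _ = ∑ i, CliffordAlgebra.contractLeft (b.coord i) (ι R (b i) * x) := by
        simp_rw [← map_smul, ← top]
    _ = ∑ i, (x - ι R (b i) * CliffordAlgebra.contractLeft (b.coord i) x) := by
        simp_rw [CliffordAlgebra.contractLeft_ι_mul, Module.Basis.coord_apply,
          Module.Basis.repr_self, Finsupp.single_eq_same, one_smul]
    _ = (k + 1) • x - k • x := by
        rw [Finset.sum_sub_distrib, sum_ι_mul_contractLeft_coord b hx, Finset.sum_const,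
          Finset.card_univ, Fintype.card_fin]
    _ = x := by rw [succ_nsmul', add_sub_cancel_right]

end TopDegree

end ExteriorAlgebra

local notation "𝐞" => Pi.basisFun ℝ (Fin 6)

theorem vol_eq_ιMulti : vol = ιMulti ℝ 6 𝐞 := by
  simp [vol, ee, ιMulti_apply, Matrix.vecTail, mul_assoc]

theorem icontr_eq_sum (v : Fin 6 → ℝ) (x : ExteriorAlgebra ℝ (Fin 6 → ℝ)) :
    icontr v x = ∑ i, v i • CliffordAlgebra.contractLeft (𝐞.coord i) x := by
  have : dualV v = ∑ i, v i • 𝐞.coord i := by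
    ext w; simp [dualV]
  simp [icontr, this, LinearMap.sum_apply]

noncomputable def jMatrix (φ : ExteriorAlgebra ℝ (Fin 6 → ℝ)) : Matrix (Fin 6) (Fin 6) ℝ :=
  fun q i => topCoeff 𝐞 (ι ℝ (𝐞 q) * (CliffordAlgebra.contractLeft (𝐞.coord i) φ * φ))

theorem icontr_mul_eq_icontr_jMatrix_mulVec_vol {φ : ExteriorAlgebra ℝ (Fin 6 → ℝ)}
    (hφ : φ ∈ ⋀[ℝ]^3 (Fin 6 → ℝ)) (v : Fin 6 → ℝ) :
    icontr v φ * φ = icontr ((jMatrix φ).mulVec v) vol := by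
  have hJ (i : Fin 6) : CliffordAlgebra.contractLeft (𝐞.coord i) φ * φ ∈ ⋀[ℝ]^5 (Fin 6 → ℝ) :=
    SetLike.mul_mem_graded (contractLeft_mem_exteriorPower (k := 2) _ hφ) hφ
  calc icontr v φ * φ = ∑ i, v i • (CliffordAlgebra.contractLeft (𝐞.coord i) φ * φ) := by
        simp_rw [icontr_eq_sum, Finset.sum_mul, smul_mul_assoc]
    _ = ∑ i, v i • ∑ q, jMatrix φ q i • CliffordAlgebra.contractLeft (𝐞.coord q) vol := by
        simp_rw [vol_eq_ιMulti, jMatrix, sum_topCoeff_smul_contractLeft_ιMulti 𝐞 (hJ _)]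
    _ = icontr ((jMatrix φ).mulVec v) vol := by
        simp_rw [icontr_eq_sum, Matrix.mulVec, dotProduct, Finset.sum_smul, Finset.smul_sum,
          smul_smul]
        rw [Finset.sum_comm]
        simp_rw [mul_comm]

theorem trace_jMatrix {φ : ExteriorAlgebra ℝ (Fin 6 → ℝ)} (hφ : φ ∈ ⋀[ℝ]^3 (Fin 6 → ℝ)) :
    (jMatrix φ).trace = 0 :=
  calc (jMatrix φ).trace
      = topCoeff 𝐞 ((∑ q, ι ℝ (𝐞 q) * CliffordAlgebra.contractLeft (𝐞.coord q) φ) * φ) := by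
        simp_rw [Matrix.trace, Matrix.diag, jMatrix, Finset.sum_mul, map_sum, mul_assoc]
    _ = 0 := by
        rw [sum_ι_mul_contractLeft_coord 𝐞 hφ, smul_mul_assoc,
          mul_self_eq_zero_of_odd (by decide) hφ, smul_zero, map_zero]

/-- for every 3-form `φ` on `ℝ⁶`, the map
`J_φ(v) = (v⌟φ)∧φ`, viewed via `Λ⁵(V*) ≅ V ⊗ Λ⁶(V*)` (i.e. `J_φ(v) = A(v) ⌟ Ω`)
as an endomorphism-valued 6-form, has trace zero. -/
theorem stmt16 (φ : ExteriorAlgebra ℝ (Fin 6 → ℝ)) (hφ : φ ∈ threeForms) :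
    ∃ A : (Fin 6 → ℝ) →ₗ[ℝ] (Fin 6 → ℝ),
      (∀ v, icontr v φ * φ = icontr (A v) vol) ∧
      LinearMap.trace ℝ (Fin 6 → ℝ) A = 0 := by
  rw [threeForms, ιMulti_span_fixedDegree] at hφ
  exact ⟨(jMatrix φ).toLin', icontr_mul_eq_icontr_jMatrix_mulVec_vol hφ,
    by rw [Matrix.trace_toLin'_eq, trace_jMatrix hφ]⟩
end

section
/- Let φ be a 3-form on a 6-dimensional real vector space V such that v ⌟ φ ≠ 0 for all nonzero v (nondegenerate) and α ∧ φ ≠ 0 for all nonzero α ∈ V* (no linear divisor). If the kernel K_φ of J_φ (where J_φ(v) = (v⌟φ)∧φ) contains vectors v₁, v₂, then v₁ ⌟ (v₂ ⌟ φ) = 0. -/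
open ExteriorAlgebra

/- ### Auxiliary machinery -/

abbrev V6 := Fin 6 → ℝ
abbrev E6 := ExteriorAlgebra ℝ V6

/-- Abbreviation for contraction as a linear map. -/
noncomputable def ctr (d : Module.Dual ℝ V6) : E6 →ₗ[ℝ] E6 :=
  CliffordAlgebra.contractLeft d

/-- 2-forms. -/
noncomputable def twoForms : Submodule ℝ E6 :=
  Submodule.span ℝ (Set.range (ExteriorAlgebra.ιMulti ℝ 2 (M := V6)))

lemma anti (x y : V6) : ι ℝ x * ι ℝ y = -(ι ℝ y * ι ℝ x) :=
  eq_neg_of_add_eq_zero_left (ι_add_mul_swap x y)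

lemma ιMulti_two (w : Fin 2 → V6) : ιMulti ℝ 2 w = ι ℝ (w 0) * ι ℝ (w 1) := by
  simp [ιMulti_succ_apply, Matrix.vecTail]

lemma pair_mem (x y : V6) : ι ℝ x * ι ℝ y ∈ twoForms :=
  Submodule.subset_span ⟨![x, y], by rw [ιMulti_two]; simp⟩

lemma ιMulti_three (w : Fin 3 → V6) :
    ιMulti ℝ 3 w = ι ℝ (w 0) * (ι ℝ (w 1) * ι ℝ (w 2)) := by
  simp [ιMulti_succ_apply, Matrix.vecTail, mul_assoc]

lemma ctr_ι_mul (d : Module.Dual ℝ V6) (m : V6) (b : E6) :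
    ctr d (ι ℝ m * b) = d m • b - ι ℝ m * ctr d b :=
  CliffordAlgebra.contractLeft_ι_mul d m b

lemma ctr_ι (d : Module.Dual ℝ V6) (m : V6) :
    ctr d (ι ℝ m) = algebraMap ℝ E6 (d m) :=
  CliffordAlgebra.contractLeft_ι (0 : QuadraticForm ℝ V6) d m

lemma ctr_pair (d : Module.Dual ℝ V6) (x y : V6) :
    ctr d (ι ℝ x * ι ℝ y) = d x • ι ℝ y - d y • ι ℝ x := by
  rw [ctr_ι_mul, ctr_ι, ← Algebra.commutes, ← Algebra.smul_def]

lemma ctr_pair_mul (d : Module.Dual ℝ V6) (x y : V6) (b : E6) :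
    ctr d ((ι ℝ x * ι ℝ y) * b) = ctr d (ι ℝ x * ι ℝ y) * b + (ι ℝ x * ι ℝ y) * ctr d b := by
  rw [mul_assoc, ctr_ι_mul, ctr_ι_mul, ctr_pair]
  simp only [mul_sub, smul_sub, sub_mul, smul_mul_assoc, mul_smul_comm, mul_assoc]
  abel

/-- Product rule for contraction with an even (2-form) left factor. -/
lemma ctr_mul2 (d : Module.Dual ℝ V6) {a : E6} (ha : a ∈ twoForms) (b : E6) :
    ctr d (a * b) = ctr d a * b + a * ctr d b := by
  induction ha using Submodule.span_induction with
  | mem a h =>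
    obtain ⟨w, rfl⟩ := h
    rw [ιMulti_two]
    exact ctr_pair_mul d _ _ b
  | zero => simp
  | add x y _ _ hx hy =>
    rw [add_mul, map_add, map_add, add_mul, add_mul, hx, hy]; abel
  | smul r x _ hx =>
    rw [smul_mul_assoc, map_smul, map_smul, smul_mul_assoc, hx, smul_add, smul_mul_assoc]

/-- A 2-form is central (it commutes with everything). -/
lemma central2 (x y : V6) (b : E6) : (ι ℝ x * ι ℝ y) * b = b * (ι ℝ x * ι ℝ y) := by
  induction b using CliffordAlgebra.induction with
  | algebraMap r => rw [← Algebra.commutes]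
  | ι m =>
    show _ = CliffordAlgebra.ι 0 m * _
    rw [show CliffordAlgebra.ι (0 : QuadraticForm ℝ V6) m = ι ℝ m from rfl]
    rw [mul_assoc, anti y m, mul_neg, ← mul_assoc, anti x m, neg_mul, neg_neg, mul_assoc]
  | add a b ha hb => rw [mul_add, add_mul, ha, hb]
  | mul a b ha hb => rw [← mul_assoc, ha, mul_assoc, hb, mul_assoc]

lemma comm2 {a : E6} (ha : a ∈ twoForms) (b : E6) : a * b = b * a := by
  induction ha using Submodule.span_induction with
  | mem a h =>
    obtain ⟨w, rfl⟩ := h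
    rw [ιMulti_two]
    exact central2 _ _ b
  | zero => simp
  | add x y _ _ hx hy => rw [add_mul, mul_add, hx, hy]
  | smul r x _ hx => rw [smul_mul_assoc, mul_smul_comm, hx]

/-- Contraction of a 3-form is a 2-form. -/
lemma ctr_threeForms (d : Module.Dual ℝ V6) {φ : E6} (hφ : φ ∈ threeForms) :
    ctr d φ ∈ twoForms := by
  induction hφ using Submodule.span_induction with
  | mem a h =>
    obtain ⟨w, rfl⟩ := h
    rw [ιMulti_three, ctr_ι_mul, ctr_pair]
    refine Submodule.sub_mem _ (Submodule.smul_mem _ _ (pair_mem _ _)) ?_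
    rw [mul_sub, mul_smul_comm, mul_smul_comm]
    exact Submodule.sub_mem _ (Submodule.smul_mem _ _ (pair_mem _ _))
      (Submodule.smul_mem _ _ (pair_mem _ _))
  | zero => simp
  | add x y _ _ hx hy => rw [map_add]; exact Submodule.add_mem _ hx hy
  | smul r x _ hx => rw [map_smul]; exact Submodule.smul_mem _ _ hx

/-- A double contraction of a 3-form is a 1-form. -/
lemma ctr_ctr_threeForms (d d' : Module.Dual ℝ V6) {φ : E6} (hφ : φ ∈ threeForms) :
    ctr d' (ctr d φ) ∈ LinearMap.range (ι ℝ : V6 →ₗ[ℝ] E6) := by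
  induction hφ using Submodule.span_induction with
  | mem a h =>
    obtain ⟨w, rfl⟩ := h
    rw [ιMulti_three, ctr_ι_mul, ctr_pair]
    rw [mul_sub, mul_smul_comm, mul_smul_comm]
    simp only [map_sub, map_smul, ctr_pair]
    have mem : ∀ (r : ℝ) (z : V6), r • ι ℝ z ∈ LinearMap.range (ι ℝ : V6 →ₗ[ℝ] E6) :=
      fun r z => Submodule.smul_mem _ _ ⟨_, rfl⟩
    refine Submodule.sub_mem _ (Submodule.smul_mem _ _
      (Submodule.sub_mem _ (mem _ _) (mem _ _))) (Submodule.sub_mem _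
      (Submodule.smul_mem _ _ (Submodule.sub_mem _ (mem _ _) (mem _ _)))
      (Submodule.smul_mem _ _ (Submodule.sub_mem _ (mem _ _) (mem _ _))))
  | zero => simp
  | add x y _ _ hx hy => rw [map_add, map_add]; exact Submodule.add_mem _ hx hy
  | smul r x _ hx => rw [map_smul, map_smul]; exact Submodule.smul_mem _ _ hx

/-- if `φ` is a 3-form on `ℝ⁶` that is nondegenerate
(`v ⌟ φ ≠ 0` for all `v ≠ 0`) and has no linear divisor (`α ∧ φ ≠ 0` for all
nonzero `α ∈ V*`), then any two vectors `v₁, v₂` in the kernel of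
`J_φ(v) = (v⌟φ)∧φ` satisfy `v₁ ⌟ (v₂ ⌟ φ) = 0`. -/
theorem stmt19 (φ : ExteriorAlgebra ℝ (Fin 6 → ℝ)) (hφ : φ ∈ threeForms)
    (hnd : ∀ v : Fin 6 → ℝ, v ≠ 0 → icontr v φ ≠ 0)
    (hnl : ∀ α : Fin 6 → ℝ, α ≠ 0 → ExteriorAlgebra.ι ℝ α * φ ≠ 0)
    (v₁ v₂ : Fin 6 → ℝ)
    (h₁ : icontr v₁ φ * φ = 0) (h₂ : icontr v₂ φ * φ = 0) :
    icontr v₁ (icontr v₂ φ) = 0 := by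
  set d₁ := dualV v₁
  set d₂ := dualV v₂
  have hψ₁ : icontr v₁ φ = ctr d₁ φ := rfl
  have hψ₂ : icontr v₂ φ = ctr d₂ φ := rfl
  set ψ₁ := ctr d₁ φ with hψ₁'
  set ψ₂ := ctr d₂ φ with hψ₂'
  rw [hψ₁] at h₁
  rw [hψ₂] at h₂
  have hm₁ : ψ₁ ∈ twoForms := ctr_threeForms d₁ hφ
  have hm₂ : ψ₂ ∈ twoForms := ctr_threeForms d₂ hφ
  -- contract h₁ with d₂ and h₂ with d₁
  have e₁ : ctr d₂ ψ₁ * φ + ψ₁ * ψ₂ = 0 := by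
    have := congrArg (ctr d₂) h₁
    rwa [ctr_mul2 d₂ hm₁ φ, map_zero] at this
  have e₂ : ctr d₁ ψ₂ * φ + ψ₂ * ψ₁ = 0 := by
    have := congrArg (ctr d₁) h₂
    rwa [ctr_mul2 d₁ hm₂ φ, map_zero] at this
  -- anticommutation of contractions
  have hcomm : ctr d₂ ψ₁ = -(ctr d₁ ψ₂) := by
    exact CliffordAlgebra.contractLeft_comm d₂ d₁ φ
  -- 2-forms commute
  have hc : ψ₁ * ψ₂ = ψ₂ * ψ₁ := comm2 hm₁ ψ₂
  rw [hcomm, hc, neg_mul] at e₁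
  -- hence 2 • (ctr d₁ ψ₂) * φ = 0
  have key : ctr d₁ ψ₂ * φ = 0 := by
    have h2 : (2 : ℝ) • (ctr d₁ ψ₂ * φ) = 0 := by
      have := sub_eq_zero.mpr (e₂.trans e₁.symm)
      rw [show ctr d₁ ψ₂ * φ + ψ₂ * ψ₁ - (-(ctr d₁ ψ₂ * φ) + ψ₂ * ψ₁)
          = (2 : ℝ) • (ctr d₁ ψ₂ * φ) by ring_nf; module] at this
      exact this
    have := smul_eq_zero.mp h2
    simpa using this
  -- the double contraction is a 1-form
  obtain ⟨α, hα⟩ := ctr_ctr_threeForms d₂ d₁ hφ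
  show ctr d₁ ψ₂ = 0
  rw [← hα]
  by_cases hz : α = 0
  · rw [hz, map_zero]
  · exact absurd (by rw [hα]; exact key) (hnl α hz)
end
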